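/- arXiv:0901.0163 — 2 statements merged into one kernel-verified Lean document; each statement's English description precedes it below -/
import Mathlib

section
/- Suppose {S_i} is a stationary binary Markov chain and conditioned on (S_i, S_{i+1}) the variable Ŝ_i is independent of all other variables in (S,Ŝ). Then conditioned on (S_{i−1}, S_{i+1}, Ŝ_{i−1}, Ŝ_i), the variable S_i is independent of all remaining variables in (S,Ŝ), and consequently H(S_i | Ŝ, S₀^{i−1}) ≥ H(S_i | S_{i−1}, S_{i+1}, Ŝ_{i−1}, Ŝ_i). -/
open MeasureTheory

/-- Shannon entropy (in bits) of a random variable `X` with values in a finite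
type, under the measure `μ`. -/
noncomputable def ent {Ω : Type*} [MeasurableSpace Ω] {α : Type*} [Fintype α]
    (μ : Measure Ω) (X : Ω → α) : ℝ :=
  ∑ a : α, -(((μ (X ⁻¹' {a})).toReal) * Real.logb 2 ((μ (X ⁻¹' {a})).toReal))

/-- Conditional entropy `H(X|Y) = H(X,Y) − H(Y)` (in bits). -/
noncomputable def condEnt {Ω : Type*} [MeasurableSpace Ω] {α β : Type*}
    [Fintype α] [Fintype β] (μ : Measure Ω) (X : Ω → α) (Y : Ω → β) : ℝ :=
  ent μ (fun ω => (X ω, Y ω)) - ent μ Y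

/-
Conditional independence becomes a linear condition on entropies: `X ⊥ Y | Z` means
`I(X;Y|Z) = 0`, and Gibbs' inequality gives `I ≥ 0`. With these two facts the chain rule for `I`
yields the semi-graphoid rules (decomposition, weak union, contraction), which only involve the
joint entropy as a function of the set of coordinates of `(S, Ŝ)`.

The Markov property gives, by induction along the chain, that past and future are independent
given the present, hence `S_i ⊥ (S_j)_{j ∉ {i-1,i,i+1}} | S_{i-1}, S_{i+1}`. The outputs `Ŝ_j` are
then added one at a time: `Ŝ_{i-1}` and `Ŝ_i`, whose inputs involve `S_i`, join the condition and
every other `Ŝ_j` joins the independent side; each step is the channel hypothesis for `Ŝ_j`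
weakened by weak union. The inequality holds because conditioning on more reduces entropy.
-/

open Finset

section FiniteDistribution

variable {κ α β γ : Type*} [Fintype κ] {p : κ → ℝ}

variable (p) in
open Classical in
noncomputable def fiberMass (f : κ → α) (a : α) : ℝ := ∑ k with f k = a, p k

theorem sum_mul_comp_eq_sum_fiberMass [Fintype α] (f : κ → α) (F : α → ℝ) :
    ∑ k, p k * F (f k) = ∑ a, fiberMass p f a * F a := by
  classical
  rw [← sum_fiberwise univ f]
  refine sum_congr rfl fun a _ => ?_
  rw [fiberMass, sum_mul]
  exact sum_congr rfl fun k hk => by rw [(mem_filter.1 hk).2]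

theorem sum_fiberMass [Fintype α] (f : κ → α) : ∑ a, fiberMass p f a = ∑ k, p k := by
  simpa using (sum_mul_comp_eq_sum_fiberMass (p := p) f fun _ => 1).symm

theorem fiberMass_nonneg (hp : ∀ k, 0 ≤ p k) (f : κ → α) (a : α) : 0 ≤ fiberMass p f a :=
  sum_nonneg fun k _ => hp k

theorem le_fiberMass (hp : ∀ k, 0 ≤ p k) (f : κ → α) (k : κ) : p k ≤ fiberMass p f (f k) :=
  single_le_sum (fun j _ => hp j) (by simp)

theorem sum_fiberMass_pair [Fintype α] (f : κ → α) (h : κ → γ) (c : γ) :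
    ∑ a, fiberMass p (fun k => (f k, h k)) (a, c) = fiberMass p h c := by
  classical
  simp only [fiberMass, Prod.mk.injEq]
  rw [← sum_fiberwise (univ.filter fun k => h k = c) f p]
  simp only [filter_filter, and_comm]

variable [Fintype α] [Fintype β] [Fintype γ]

theorem sum_mul_fiberMass_ratio_le_one (hp : ∀ k, 0 ≤ p k) (hsum : ∑ k, p k = 1)
    (f : κ → α) (g : κ → β) (h : κ → γ) :
    ∑ k, p k * (fiberMass p (fun k => (f k, h k)) (f k, h k)
      * fiberMass p (fun k => (g k, h k)) (g k, h k)
      / (fiberMass p (fun k => (f k, g k, h k)) (f k, g k, h k) * fiberMass p h (h k))) ≤ 1 := by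
  let mfh := fiberMass p (fun k => (f k, h k))
  let mgh := fiberMass p (fun k => (g k, h k))
  let mh := fiberMass p h
  let mfgh := fiberMass p (fun k => (f k, g k, h k))
  calc _ = ∑ v : α × β × γ, mfgh v * (mfh (v.1, v.2.2) * mgh v.2 / (mfgh v * mh v.2.2)) :=
        sum_mul_comp_eq_sum_fiberMass (fun k => (f k, g k, h k))
          fun v => mfh (v.1, v.2.2) * mgh v.2 / (mfgh v * mh v.2.2)
    _ ≤ ∑ v : α × β × γ, mfh (v.1, v.2.2) * mgh v.2 / mh v.2.2 := by
        gcongr with v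
        rw [← mul_div_assoc, mul_div_mul_comm]
        refine mul_le_of_le_one_left (div_nonneg (mul_nonneg ?_ ?_) ?_) (div_self_le_one _) <;>
          exact fiberMass_nonneg hp _ _
    _ = ∑ c, (∑ a, mfh (a, c)) * (∑ b, mgh (b, c)) / mh c := by
        simp only [Fintype.sum_prod_type, sum_mul_sum, sum_div]
        exact (sum_congr rfl fun a _ => sum_comm).trans sum_comm
    _ = ∑ c, mh c * mh c / mh c := by simp only [mfh, mgh, mh, sum_fiberMass_pair]
    _ ≤ ∑ c, mh c := sum_le_sum fun c _ => by
        rw [mul_div_assoc]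
        exact mul_le_of_le_one_right (fiberMass_nonneg hp h c) (div_self_le_one (mh c))
    _ = 1 := by rw [sum_fiberMass, hsum]

theorem mul_one_sub_le_mul_log {x a b c d : ℝ} (hx : 0 ≤ x) (ha : x ≤ a) (hb : x ≤ b)
    (hc : x ≤ c) (hd : x ≤ d) :
    x * (1 - a * b / (c * d)) ≤ x * (Real.log c + Real.log d - Real.log a - Real.log b) := by
  rcases hx.eq_or_lt with rfl | hx
  · simp
  have ha := hx.trans_le ha
  have hb := hx.trans_le hb
  have hc := hx.trans_le hc
  have hd := hx.trans_le hd
  have hlog := Real.log_le_sub_one_of_pos (div_pos (mul_pos ha hb) (mul_pos hc hd))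
  rw [Real.log_div (mul_pos ha hb).ne' (mul_pos hc hd).ne', Real.log_mul ha.ne' hb.ne',
    Real.log_mul hc.ne' hd.ne'] at hlog
  exact mul_le_mul_of_nonneg_left (by linarith) hx.le

/-- `I(f;g|h) ≥ 0`, each entropy being written as an average over the sample space of
`-log` of the mass of the fibre through the sample point. -/
theorem sum_mul_log_fiberMass_nonneg (hp : ∀ k, 0 ≤ p k) (hsum : ∑ k, p k = 1)
    (f : κ → α) (g : κ → β) (h : κ → γ) :
    0 ≤ ∑ k, p k * (Real.log (fiberMass p (fun k => (f k, g k, h k)) (f k, g k, h k))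
      + Real.log (fiberMass p h (h k)) - Real.log (fiberMass p (fun k => (f k, h k)) (f k, h k))
      - Real.log (fiberMass p (fun k => (g k, h k)) (g k, h k))) := by
  refine le_trans ?_ (sum_le_sum fun k _ => mul_one_sub_le_mul_log (hp k)
    (le_fiberMass hp _ k) (le_fiberMass hp _ k) (le_fiberMass hp _ k) (le_fiberMass hp _ k))
  simp only [mul_sub, mul_one, sum_sub_distrib, hsum]
  linarith [sum_mul_fiberMass_ratio_le_one hp hsum f g h]

end FiniteDistribution

section Entropy

variable {Ω α β : Type*} [MeasurableSpace Ω] (μ : Measure Ω) [Fintype α] [Fintype β]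
  {X : Ω → α} {Y : Ω → β}

theorem ent_pair_eq_left (hXY : ∀ ω ω', X ω = X ω' → Y ω = Y ω') :
    ent μ (fun ω => (X ω, Y ω)) = ent μ X := by
  unfold ent
  rw [Fintype.sum_prod_type]
  refine sum_congr rfl fun a _ => ?_
  by_cases ha : ∃ ω, X ω = a
  · obtain ⟨ω₀, rfl⟩ := ha
    rw [sum_eq_single (Y ω₀)]
    · have : (fun ω => (X ω, Y ω)) ⁻¹' {(X ω₀, Y ω₀)} = X ⁻¹' {X ω₀} := by
        ext ω
        simpa using fun h => hXY ω ω₀ h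
      rw [this]
    · intro b _ hb
      have : (fun ω => (X ω, Y ω)) ⁻¹' {(X ω₀, b)} = ∅ := by
        ext ω
        simp only [Set.mem_preimage, Set.mem_singleton_iff, Prod.mk.injEq, Set.mem_empty_iff_false,
          iff_false, not_and]
        exact fun h hb' => hb (hb' ▸ hXY ω ω₀ h)
      simp [this]
    · simp
  · simp only [not_exists] at ha
    have h1 : X ⁻¹' {a} = ∅ := by ext ω; simpa using ha ω
    have h2 : ∀ b, (fun ω => (X ω, Y ω)) ⁻¹' {(a, b)} = ∅ := fun b => by
      ext ω; simpa using fun h => absurd h (ha ω)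
    simp [h1, h2]

theorem ent_pair_comm : ent μ (fun ω => (Y ω, X ω)) = ent μ (fun ω => (X ω, Y ω)) := by
  refine Fintype.sum_equiv (Equiv.prodComm β α) _ _ fun v => ?_
  have : (fun ω => (Y ω, X ω)) ⁻¹' {v} = (fun ω => (X ω, Y ω)) ⁻¹' {v.swap} := by
    ext ω; simp [Prod.ext_iff, and_comm]
  rw [this]
  rfl

theorem ent_congr (h : ∀ ω ω', X ω = X ω' ↔ Y ω = Y ω') : ent μ X = ent μ Y := by
  rw [← ent_pair_eq_left μ fun ω ω' => (h ω ω').1, ← ent_pair_comm,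
    ent_pair_eq_left μ fun ω ω' => (h ω ω').2]

end Entropy

section Shannon

variable {Ω κ α β γ : Type*} [MeasurableSpace Ω] (μ : Measure Ω) [Fintype κ]
  [MeasurableSpace κ] [MeasurableSingletonClass κ] {T : Ω → κ}

theorem measureReal_comp_preimage_singleton [IsFiniteMeasure μ] (hT : Measurable T)
    (f : κ → α) (a : α) :
    μ.real ((fun ω => f (T ω)) ⁻¹' {a}) = fiberMass (fun k => μ.real (T ⁻¹' {k})) f a := by
  rw [fiberMass, sum_measureReal_preimage_singleton _ fun k _ => hT (measurableSet_singleton k)]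
  congr 1
  ext ω
  simp

theorem ent_comp_eq_sum [IsFiniteMeasure μ] [Fintype α] (hT : Measurable T) (f : κ → α) :
    ent μ (fun ω => f (T ω)) = -∑ k, μ.real (T ⁻¹' {k})
      * Real.logb 2 (fiberMass (fun k => μ.real (T ⁻¹' {k})) f (f k)) := by
  simp only [ent, ← measureReal_def, measureReal_comp_preimage_singleton μ hT, sum_neg_distrib]
  rw [sum_mul_comp_eq_sum_fiberMass f fun a => Real.logb 2 (fiberMass _ f a)]

theorem sum_measureReal_preimage_singleton_eq_one [IsProbabilityMeasure μ] (hT : Measurable T) :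
    ∑ k, μ.real (T ⁻¹' {k}) = 1 := by
  rw [sum_measureReal_preimage_singleton _ fun k _ => hT (measurableSet_singleton k)]
  simp

theorem ent_submodular [IsProbabilityMeasure μ]
    [Fintype α] [MeasurableSpace α] [MeasurableSingletonClass α]
    [Fintype β] [MeasurableSpace β] [MeasurableSingletonClass β]
    [Fintype γ] [MeasurableSpace γ] [MeasurableSingletonClass γ]
    {X : Ω → α} {Y : Ω → β} {Z : Ω → γ} (hX : Measurable X) (hY : Measurable Y)
    (hZ : Measurable Z) :
    ent μ (fun ω => (X ω, Y ω, Z ω)) + ent μ Z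
      ≤ ent μ (fun ω => (X ω, Z ω)) + ent μ (fun ω => (Y ω, Z ω)) := by
  have hT : Measurable fun ω => (X ω, Y ω, Z ω) := hX.prodMk (hY.prodMk hZ)
  have gibbs := sum_mul_log_fiberMass_nonneg (fun k => measureReal_nonneg)
    (sum_measureReal_preimage_singleton_eq_one μ hT) Prod.fst (fun k => k.2.1) (fun k => k.2.2)
  rw [ent_comp_eq_sum μ hT fun k => (k.1, k.2.1, k.2.2), ent_comp_eq_sum μ hT fun k => k.2.2,
    ent_comp_eq_sum μ hT fun k => (k.1, k.2.2), ent_comp_eq_sum μ hT fun k => (k.2.1, k.2.2)]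
  simp only [Real.logb, mul_div_assoc', ← sum_div, mul_add, mul_sub, sum_add_distrib,
    sum_sub_distrib] at gibbs ⊢
  have key : ∀ a b c d : ℝ, 0 ≤ a + b - c - d →
      -(a / Real.log 2) + -(b / Real.log 2) ≤ -(c / Real.log 2) + -(d / Real.log 2) := by
    intro a b c d h
    rw [← neg_add, ← neg_add, neg_le_neg_iff, ← add_div, ← add_div]
    exact div_le_div_of_nonneg_right (by linarith) (Real.log_pos one_lt_two).le
  exact key _ _ _ _ gibbs

end Shannon

section SemiGraphoid

variable {L : Type*} [SemilatticeSup L] (h : L → ℝ)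

def condEntropy (a c : L) : ℝ := h (a ⊔ c) - h c

def condMutualInfo (a b c : L) : ℝ := condEntropy h a c - condEntropy h a (b ⊔ c)

def CondIndep (a b c : L) : Prop := condMutualInfo h a b c = 0

variable {h} {a a' b b' c c' d : L}

theorem condMutualInfo_comm (a b c : L) : condMutualInfo h a b c = condMutualInfo h b a c := by
  simp only [condMutualInfo, condEntropy, sup_left_comm a b c]
  ring

theorem condMutualInfo_sup_right (a b d c : L) :
    condMutualInfo h a (b ⊔ d) c = condMutualInfo h a b c + condMutualInfo h a d (b ⊔ c) := by
  simp only [condMutualInfo, condEntropy, show b ⊔ d ⊔ c = d ⊔ (b ⊔ c) by ac_rfl]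
  ring

theorem condMutualInfo_congr_right (hb : b ⊔ c = b' ⊔ c) :
    condMutualInfo h a b c = condMutualInfo h a b' c := by
  simp only [condMutualInfo, hb]

theorem condIndep_of_le (hb : b ≤ c) : CondIndep h a b c := by
  simp [CondIndep, condMutualInfo, sup_eq_right.2 hb]

theorem condIndep_iff_condEntropy_eq (hc : c ≤ b) :
    CondIndep h a b c ↔ condEntropy h a b = condEntropy h a c := by
  rw [CondIndep, condMutualInfo, sup_eq_left.2 hc, sub_eq_zero, eq_comm]

theorem CondIndep.symm (hab : CondIndep h a b c) : CondIndep h b a c :=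
  (condMutualInfo_comm b a c).trans hab

theorem CondIndep.sup_right (hab : CondIndep h a b c) (had : CondIndep h a d (b ⊔ c)) :
    CondIndep h a (b ⊔ d) c := by
  rw [CondIndep, condMutualInfo_sup_right, hab, had, add_zero]

section NonnegMutualInfo

variable (hI : ∀ a b c, 0 ≤ condMutualInfo h a b c)
include hI

theorem condMutualInfo_mono_right (hb : b ≤ b') :
    condMutualInfo h a b c ≤ condMutualInfo h a b' c := by
  have := condMutualInfo_sup_right (h := h) a b b' c
  rw [sup_eq_right.2 hb] at this
  linarith [hI a b' (b ⊔ c)]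

/-- Weak union moves `c'`, a part of `a ⊔ c`, into the condition; decomposition then shrinks
both sides. -/
theorem condMutualInfo_le_of_le (hc : c ≤ c') (hc' : c' ≤ a ⊔ c) (ha : a' ≤ a ⊔ c')
    (hb : b' ≤ b ⊔ c') : condMutualInfo h a' b' c' ≤ condMutualInfo h a b c := by
  have hac : c' ⊔ a ⊔ c = a ⊔ c :=
    le_antisymm (sup_le (sup_le hc' le_sup_left) le_sup_right)
      (sup_le (le_sup_right.trans le_sup_left) le_sup_right)
  calc condMutualInfo h a' b' c' ≤ condMutualInfo h a' (b ⊔ c') c' :=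
        condMutualInfo_mono_right hI hb
    _ = condMutualInfo h b a' c' := by
        rw [condMutualInfo_congr_right (b' := b) (by rw [sup_assoc, sup_idem]),
          condMutualInfo_comm]
    _ ≤ condMutualInfo h b (a ⊔ c') c' := condMutualInfo_mono_right hI ha
    _ = condMutualInfo h b a c' := condMutualInfo_congr_right (by rw [sup_assoc, sup_idem])
    _ ≤ condMutualInfo h b (c' ⊔ a) c := by
        have := condMutualInfo_sup_right (h := h) b c' a c
        rw [sup_eq_left.2 hc] at this
        linarith [hI b c' c]
    _ = condMutualInfo h a b c := by
        rw [condMutualInfo_congr_right (b' := a) hac, condMutualInfo_comm]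

theorem CondIndep.mono (hab : CondIndep h a b c) (hc : c ≤ c') (hc' : c' ≤ a ⊔ c)
    (ha : a' ≤ a ⊔ c') (hb : b' ≤ b ⊔ c') : CondIndep h a' b' c' :=
  le_antisymm ((condMutualInfo_le_of_le hI hc hc' ha hb).trans hab.le) (hI a' b' c')

theorem CondIndep.sup_cond (hab : CondIndep h a b c) (hdb : CondIndep h d b (a ⊔ c)) :
    CondIndep h a b (d ⊔ c) := by
  have h1 := condMutualInfo_sup_right (h := h) b a d c
  have h2 := condMutualInfo_sup_right (h := h) b d a c
  rw [sup_comm d a] at h2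
  have hba : condMutualInfo h b a c = 0 := hab.symm
  have hbd : condMutualInfo h b d (a ⊔ c) = 0 := hdb.symm
  exact CondIndep.symm (le_antisymm (by linarith [hI b d c]) (hI b a (d ⊔ c)))

theorem condEntropy_anti (hc : c ≤ c') : condEntropy h a c' ≤ condEntropy h a c := by
  have := hI a c' c
  rw [condMutualInfo, sup_eq_left.2 hc] at this
  linarith

end NonnegMutualInfo

end SemiGraphoid

section Encodes

variable {Ω ι β γ δ : Type*} (X : ι → Ω → β)

def Encodes (D : Finset ι) (Y : Ω → γ) : Prop :=
  ∀ ω ω', Y ω = Y ω' ↔ ∀ d ∈ D, X d ω = X d ω'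

variable {X}

theorem encodes_restrict (D : Finset ι) : Encodes X D fun ω (d : D) => X d ω := by
  intro ω ω'
  simp [funext_iff]

theorem Encodes.prod [DecidableEq ι] {A C : Finset ι} {Y : Ω → γ} {Z : Ω → δ}
    (hY : Encodes X A Y) (hZ : Encodes X C Z) : Encodes X (A ∪ C) fun ω => (Y ω, Z ω) := by
  intro ω ω'
  rw [Prod.mk.injEq, hY, hZ, forall_mem_union]

end Encodes

section JointEntropy

variable {Ω ι β γ δ : Type*} [MeasurableSpace Ω] (μ : Measure Ω) [DecidableEq ι] [Fintype β]
  (X : ι → Ω → β)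

noncomputable def jointEnt (A : Finset ι) : ℝ := ent μ fun ω (a : A) => X a ω

variable {X}

theorem Encodes.ent_eq [Fintype γ] {D : Finset ι} {Y : Ω → γ} (hY : Encodes X D Y) :
    ent μ Y = jointEnt μ X D :=
  ent_congr μ fun ω ω' => (hY ω ω').trans (encodes_restrict D ω ω').symm

theorem Encodes.condEnt_eq [Fintype γ] [Fintype δ] {A C : Finset ι} {Y : Ω → γ} {Z : Ω → δ}
    (hY : Encodes X A Y) (hZ : Encodes X C Z) :
    condEnt μ Y Z = condEntropy (jointEnt μ X) A C := by
  rw [condEnt, (hY.prod hZ).ent_eq μ, hZ.ent_eq μ]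
  rfl

theorem condMutualInfo_jointEnt_nonneg [IsProbabilityMeasure μ] [MeasurableSpace β]
    [MeasurableSingletonClass β] (hX : ∀ i, Measurable (X i)) (A B C : Finset ι) :
    0 ≤ condMutualInfo (jointEnt μ X) A B C := by
  have hm (D : Finset ι) : Measurable fun ω (d : D) => X d ω :=
    measurable_pi_lambda _ fun d => hX d
  have := ent_submodular μ (hm A) (hm B) (hm C)
  rw [((encodes_restrict A).prod ((encodes_restrict B).prod (encodes_restrict C))).ent_eq μ,
    (encodes_restrict C).ent_eq μ, ((encodes_restrict A).prod (encodes_restrict C)).ent_eq μ,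
    ((encodes_restrict B).prod (encodes_restrict C)).ent_eq μ] at this
  simp only [condMutualInfo, condEntropy, sup_eq_union]
  linarith

end JointEntropy

section MarkovChainWithChannel

variable {N : ℕ} {h : Finset (ℕ ⊕ ℕ) → ℝ} (hI : ∀ a b c, 0 ≤ condMutualInfo h a b c)
  (hmarkov : ∀ n, n + 1 ≤ N →
    CondIndep h (disjSum {n + 1} ∅) (disjSum (range (n + 1)) ∅) (disjSum {n} ∅))
  (hchan : ∀ j, j < N → CondIndep h (disjSum ∅ {j})
    (disjSum (range (N + 1)) ((range N).erase j)) (disjSum {j, j + 1} ∅))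
include hI

include hmarkov in
theorem condIndep_past_future {n m : ℕ} (hnm : n ≤ m) (hm : m ≤ N) :
    CondIndep h (disjSum (range n) ∅) (disjSum (Ioc n m) ∅) (disjSum {n} ∅) := by
  induction m, hnm using Nat.le_induction with
  | base => exact condIndep_of_le (by simp)
  | succ m hnm ih =>
    have hnext : CondIndep h (disjSum (range n) ∅) (disjSum {m + 1} ∅)
        (disjSum (Ioc n m) ∅ ⊔ disjSum {n} ∅) := by
      refine (hmarkov m hm).symm.mono hI ?_ ?_ ?_ ?_ <;>
        rintro (j | j) <;> simp <;> omega
    refine ((ih (by omega)).sup_right hnext).mono hI le_rfl le_sup_right le_sup_left ?_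
    rintro (j | j) <;> simp <;> omega

include hmarkov in
theorem condIndep_chain_neighbourhood {i : ℕ} (hi : 1 ≤ i) (hiN : i < N) :
    CondIndep h (disjSum {i} ∅) (disjSum (range (i - 1) ∪ Ioc (i + 1) N) ∅)
      (disjSum {i - 1, i + 1} ∅) := by
  have hfuture : CondIndep h (disjSum {i} ∅) (disjSum (Ioc (i + 1) N) ∅)
      (disjSum {i - 1, i + 1} ∅) := by
    refine (condIndep_past_future hI hmarkov hiN le_rfl).mono hI ?_ ?_ ?_ ?_ <;>
      rintro (j | j) <;> simp <;> omega
  have hpast : CondIndep h (disjSum {i} ∅) (disjSum (range (i - 1)) ∅)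
      (disjSum (Ioc (i + 1) N) ∅ ⊔ disjSum {i - 1, i + 1} ∅) := by
    refine (condIndep_past_future hI hmarkov (n := i - 1) (by omega) le_rfl).symm.mono hI
      ?_ ?_ ?_ ?_ <;> rintro (j | j) <;> simp <;> omega
  refine (hfuture.sup_right hpast).mono hI le_rfl le_sup_right le_sup_left ?_
  rintro (j | j) <;> simp <;> omega

include hchan in
theorem condIndep_channel {j : ℕ} (hj : j < N) {a c : Finset (ℕ ⊕ ℕ)}
    (hc : disjSum {j, j + 1} ∅ ≤ c) (hac : a ⊔ c ≤ disjSum (range (N + 1)) ((range N).erase j)) :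
    CondIndep h a (disjSum ∅ {j}) c :=
  (hchan j hj).symm.mono hI hc (le_sup_right.trans hac |>.trans le_sup_left)
    (le_sup_left.trans hac |>.trans le_sup_left) le_sup_left

include hmarkov hchan in
theorem condIndep_add_channels {i : ℕ} (hi : 1 ≤ i) (hiN : i < N) {m : ℕ} (hm : m ≤ N) :
    CondIndep h (disjSum {i} ∅) (disjSum (range (i - 1) ∪ Ioc (i + 1) N) (range m \ {i - 1, i}))
      (disjSum {i - 1, i + 1} (range m ∩ {i - 1, i})) := by
  induction m with
  | zero =>
    refine (condIndep_chain_neighbourhood hI hmarkov hi hiN).mono hI ?_ ?_ ?_ ?_ <;>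
      rintro (j | j) <;> simp <;> omega
  | succ m ih =>
    by_cases hmi : m = i - 1 ∨ m = i
    · refine ((ih (by omega)).sup_cond hI
        (condIndep_channel hI hchan (j := m) (by omega) ?_ ?_).symm).mono hI ?_ ?_ ?_ ?_ <;>
        rintro (j | j) <;> simp <;> omega
    · refine ((ih (by omega)).sup_right
        (condIndep_channel hI hchan (j := m) (by omega) ?_ ?_)).mono hI ?_ ?_ ?_ ?_ <;>
        rintro (j | j) <;> simp <;> omega

include hmarkov hchan in
theorem condIndep_neighbourhood {i : ℕ} (hi : 1 ≤ i) (hiN : i < N) :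
    CondIndep h (disjSum {i} ∅) (disjSum ((range (N + 1)).erase i) (range N))
      (disjSum {i - 1, i + 1} {i - 1, i}) := by
  refine (condIndep_add_channels hI hmarkov hchan hi hiN le_rfl).mono hI ?_ ?_ ?_ ?_ <;>
    rintro (j | j) <;> simp <;> omega

end MarkovChainWithChannel

/-! Coordinate `inl j` of `Sum.elim S Sh` is `S_j` and `inr j` is `Ŝ_j`. An entry of a tuple that
is the constant `false` carries no information and is not a coordinate. -/

section ChainCoordinates

variable {Ω : Type*} {S Sh : ℕ → Ω → Bool}

theorem encodes_S (j : ℕ) : Encodes (Sum.elim S Sh) (disjSum {j} ∅) (S j) := fun ω ω' => by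
  simp

theorem encodes_Sh (j : ℕ) : Encodes (Sum.elim S Sh) (disjSum ∅ {j}) (Sh j) := fun ω ω' => by
  simp

theorem encodes_S_pair (j : ℕ) :
    Encodes (Sum.elim S Sh) (disjSum {j, j + 1} ∅) fun ω => (S j ω, S (j + 1) ω) :=
  fun ω ω' => by simp

theorem encodes_S_prefix (m : ℕ) :
    Encodes (Sum.elim S Sh) (disjSum (range m) ∅) fun ω (l : Fin m) => S l ω := fun ω ω' => by
  simp [funext_iff, Fin.forall_iff]

theorem encodes_all_but_Sh {N : ℕ} (j : Fin N) :
    Encodes (Sum.elim S Sh) (disjSum (range (N + 1)) ((range N).erase j)) fun ω =>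
      ((fun l : Fin (N + 1) => S l ω), (fun l : Fin N => if l = j then false else Sh l ω)) :=
  fun ω ω' => by
    simp [funext_iff, Fin.forall_iff, Fin.ext_iff]
    grind

theorem encodes_all_but_S (N i : ℕ) :
    Encodes (Sum.elim S Sh) (disjSum ((range (N + 1)).erase i) (range N)) fun ω =>
      ((fun l : Fin (N + 1) => if (l : ℕ) = i then false else S l ω), (fun l : Fin N => Sh l ω)) :=
  fun ω ω' => by
    simp [funext_iff, Fin.forall_iff]
    grind

theorem encodes_neighbourhood (i : ℕ) :
    Encodes (Sum.elim S Sh) (disjSum {i - 1, i + 1} {i - 1, i}) fun ω =>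
      ((S (i - 1) ω, S (i + 1) ω), (Sh (i - 1) ω, Sh i ω)) :=
  fun ω ω' => by simp [and_assoc]

theorem encodes_Sh_S_prefix (N i : ℕ) :
    Encodes (Sum.elim S Sh) (disjSum (range i) (range N)) fun ω =>
      ((fun l : Fin N => Sh l ω), (fun l : Fin i => S l ω)) :=
  fun ω ω' => by simp [funext_iff, Fin.forall_iff, and_comm]

end ChainCoordinates

/-- let `S = (S₀,…,S_N)` be a stationary binary Markov chain and
suppose that, conditioned on `(S_j, S_{j+1})`, each `Ŝ_j` is independent of all
other variables in `(S, Ŝ)`.  Then, conditioned on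
`(S_{i−1}, S_{i+1}, Ŝ_{i−1}, Ŝ_i)`, the variable `S_i` is independent of all
remaining variables in `(S, Ŝ)`, and consequently
`H(S_i | Ŝ, S₀^{i−1}) ≥ H(S_i | S_{i−1}, S_{i+1}, Ŝ_{i−1}, Ŝ_i)`.
(Conditional independence is expressed via conditional-entropy equalities.) -/
theorem stmt_3 {Ω : Type*} [MeasurableSpace Ω] (μ : Measure Ω) [IsProbabilityMeasure μ]
    (N : ℕ) (S : ℕ → Ω → Bool) (Sh : ℕ → Ω → Bool)
    (hSmeas : ∀ j, Measurable (S j)) (hShmeas : ∀ j, Measurable (Sh j))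
    -- `S₀,…,S_N` is a first-order Markov chain: `H(S_{n+1}|S₀^n) = H(S_{n+1}|S_n)`
    (hmarkov : ∀ n : ℕ, n + 1 ≤ N →
      condEnt μ (S (n + 1)) (fun ω => fun l : Fin (n + 1) => S l ω) =
      condEnt μ (S (n + 1)) (S n))
    -- conditioned on `(S_j, S_{j+1})`, `Ŝ_j` is independent of everything else:
    -- `H(Ŝ_j | S₀^N, Ŝ_{≠j}) = H(Ŝ_j | S_j, S_{j+1})`
    (hcondind : ∀ j : Fin N,
      condEnt μ (Sh j) (fun ω =>
        ((fun l : Fin (N + 1) => S l ω),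
         (fun l : Fin N => if l = j then false else Sh l ω))) =
      condEnt μ (Sh j) (fun ω => (S j ω, S (j + 1) ω)))
    (i : ℕ) (hi1 : 1 ≤ i) (hiN : i < N) :
    -- conditioned on `(S_{i−1}, S_{i+1}, Ŝ_{i−1}, Ŝ_i)`, `S_i` is independent
    -- of all remaining variables in `(S, Ŝ)`:
    condEnt μ (S i) (fun ω =>
      ((fun l : Fin (N + 1) => if (l : ℕ) = i then false else S l ω),
       (fun l : Fin N => Sh l ω))) =
    condEnt μ (S i) (fun ω => ((S (i - 1) ω, S (i + 1) ω), (Sh (i - 1) ω, Sh i ω))) ∧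
    -- hence `H(S_i | Ŝ, S₀^{i−1}) ≥ H(S_i | S_{i−1}, S_{i+1}, Ŝ_{i−1}, Ŝ_i)`
    condEnt μ (S i) (fun ω =>
      ((fun l : Fin N => Sh l ω), (fun l : Fin i => S l ω))) ≥
    condEnt μ (S i) (fun ω => ((S (i - 1) ω, S (i + 1) ω), (Sh (i - 1) ω, Sh i ω))) := by
  have hI := condMutualInfo_jointEnt_nonneg μ (X := Sum.elim S Sh) (Sum.forall.2 ⟨hSmeas, hShmeas⟩)
  have hchain : ∀ n, n + 1 ≤ N → CondIndep (jointEnt μ (Sum.elim S Sh))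
      (disjSum {n + 1} ∅) (disjSum (range (n + 1)) ∅) (disjSum {n} ∅) := fun n hn => by
    have := hmarkov n hn
    rwa [(encodes_S (Sh := Sh) (n + 1)).condEnt_eq μ (encodes_S_prefix (n + 1)),
      (encodes_S (Sh := Sh) (n + 1)).condEnt_eq μ (encodes_S n),
      ← condIndep_iff_condEntropy_eq (by rintro (j | j) <;> simp <;> omega)] at this
  have hchannel : ∀ j, j < N → CondIndep (jointEnt μ (Sum.elim S Sh)) (disjSum ∅ {j})
      (disjSum (range (N + 1)) ((range N).erase j)) (disjSum {j, j + 1} ∅) := fun j hj => by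
    have := hcondind ⟨j, hj⟩
    rwa [(encodes_Sh j).condEnt_eq μ (encodes_all_but_Sh ⟨j, hj⟩),
      (encodes_Sh j).condEnt_eq μ (encodes_S_pair j),
      ← condIndep_iff_condEntropy_eq (by rintro (j | j) <;> simp <;> omega)] at this
  have hlocal := (condIndep_iff_condEntropy_eq (by rintro (j | j) <;> simp <;> omega)).1
    (condIndep_neighbourhood hI hchain hchannel hi1 hiN)
  rw [(encodes_S i).condEnt_eq μ (encodes_all_but_S N i),
    (encodes_S i).condEnt_eq μ (encodes_neighbourhood i),
    (encodes_S i).condEnt_eq μ (encodes_Sh_S_prefix N i)]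
  exact ⟨hlocal, hlocal.symm.trans_le (condEntropy_anti hI
    (by rintro (j | j) <;> simp <;> omega))⟩
end

section
/- For all n ≥ 1, the factorial satisfies √(2π)·n^{n+1/2}·e^{−n+1/(12(n+1))} ≤ n! ≤ √(2π)·n^{n+1/2}·e^{−n+1/(12n)}. -/
/-!
With `x = 1 / (2n + 1)`, the Stirling sequence satisfies
`log (stirlingSeq n) - log (stirlingSeq (n + 1)) = ∑_{k ≥ 1} x ^ (2k) / (2k + 1)`.
Bounding this series below by its first term and above by a third of the geometric series
squeezes it between the telescoping differences `1 / (12 (n + 1) (n + 2))` and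
`1 / (12 n (n + 1))`. Summing from `n` to `∞`, where `log (stirlingSeq n) → log √π`, gives
`log √π + 1 / (12 (n + 1)) ≤ log (stirlingSeq n) ≤ log √π + 1 / (12 n)`, and
`n! = stirlingSeq n * √(2n) (n / e) ^ n` turns this into the two bounds.
-/
open Real Filter Topology Stirling

theorem sub_le_of_tendsto_of_sdiff_le {f g : ℕ → ℝ} {a b : ℝ} {N : ℕ}
    (hf : Tendsto f atTop (𝓝 a)) (hg : Tendsto g atTop (𝓝 b))
    (h : ∀ n ≥ N, f n - f (n + 1) ≤ g n - g (n + 1)) {n : ℕ} (hn : N ≤ n) :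
    f n - g n ≤ a - b := by
  obtain ⟨k, rfl⟩ := Nat.exists_eq_add_of_le' hn
  refine (monotone_nat_of_le_succ fun j => ?_).ge_of_tendsto
    ((hf.sub hg).comp (tendsto_add_atTop_nat N)) k
  simp only [Function.comp_apply, show j + 1 + N = j + N + 1 by omega]
  linarith [h (j + N) (by omega)]

theorem log_stirlingSeq_sdiff_ge {n : ℕ} (hn : n ≠ 0) :
    1 / (12 * (n + 1) * (n + 2)) ≤ log (stirlingSeq n) - log (stirlingSeq (n + 1)) := by
  obtain ⟨m, rfl⟩ := Nat.exists_eq_succ_of_ne_zero hn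
  refine le_trans ?_ (le_hasSum (log_stirlingSeq_sdiff_hasSum m) 0 fun _ _ => by positivity)
  rw [div_le_iff₀ (by positivity)]
  push_cast
  field_simp
  nlinarith

theorem tendsto_log_stirlingSeq : Tendsto (fun n => log (stirlingSeq n)) atTop (𝓝 (log √π)) :=
  (continuousAt_log (sqrt_pos.mpr pi_pos).ne').tendsto.comp tendsto_stirlingSeq_sqrt_pi

theorem tendsto_one_div_twelve_mul : Tendsto (fun x : ℝ => 1 / (12 * x)) atTop (𝓝 0) := by
  simp only [one_div]
  exact (tendsto_id.const_mul_atTop (by norm_num : (0 : ℝ) < 12)).inv_tendsto_atTop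

theorem log_stirlingSeq_le {n : ℕ} (hn : n ≠ 0) :
    log (stirlingSeq n) ≤ log √π + 1 / (12 * n) := by
  have := sub_le_of_tendsto_of_sdiff_le tendsto_log_stirlingSeq
    (tendsto_one_div_twelve_mul.comp tendsto_natCast_atTop_atTop) (N := 1) (fun k hk => ?_)
    (Nat.one_le_iff_ne_zero.mpr hn)
  · simp only [Function.comp_apply] at this; linarith
  · have hk0 : (k : ℝ) ≠ 0 := by positivity
    convert log_stirlingSeq_sdiff_le k using 1
    simp only [Function.comp_apply]
    push_cast
    field_simp
    ring

theorem le_log_stirlingSeq {n : ℕ} (hn : n ≠ 0) :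
    log √π + 1 / (12 * (n + 1)) ≤ log (stirlingSeq n) := by
  have := sub_le_of_tendsto_of_sdiff_le (tendsto_one_div_twelve_mul.comp
      (tendsto_atTop_add_const_right _ 1 tendsto_natCast_atTop_atTop)) tendsto_log_stirlingSeq
    (N := 1) (fun k hk => ?_) (Nat.one_le_iff_ne_zero.mpr hn)
  · simp only [Function.comp_apply] at this; linarith
  · convert log_stirlingSeq_sdiff_ge (n := k) (by omega) using 1
    simp only [Function.comp_apply]
    push_cast
    field_simp
    ring

theorem factorial_eq_stirlingSeq_mul {n : ℕ} (hn : n ≠ 0) :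
    (n.factorial : ℝ) = stirlingSeq n * (√(2 * n) * (n / exp 1) ^ n) := by
  rw [stirlingSeq, div_mul_cancel₀]
  positivity

theorem sqrt_two_pi_mul_rpow_mul_exp (n : ℕ) (c : ℝ) :
    √(2 * π) * (n : ℝ) ^ ((n : ℝ) + 1 / 2) * exp (-n + c) =
      exp (log √π + c) * (√(2 * n) * (n / exp 1) ^ n) := by
  rw [rpow_add' (Nat.cast_nonneg n) (by positivity), rpow_natCast, ← sqrt_eq_rpow,
    exp_add, exp_add, exp_log (sqrt_pos.mpr pi_pos), exp_neg, ← exp_one_pow, div_pow,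
    sqrt_mul zero_le_two π, sqrt_mul zero_le_two (n : ℝ)]
  field_simp

/-- Robbins' bounds on the factorial. -/
theorem stmt_5 (n : ℕ) (hn : 1 ≤ n) :
    Real.sqrt (2 * Real.pi) * (n : ℝ) ^ ((n : ℝ) + 1/2) *
        Real.exp (-(n : ℝ) + 1 / (12 * ((n : ℝ) + 1))) ≤ (n.factorial : ℝ) ∧
    (n.factorial : ℝ) ≤ Real.sqrt (2 * Real.pi) * (n : ℝ) ^ ((n : ℝ) + 1/2) *
        Real.exp (-(n : ℝ) + 1 / (12 * (n : ℝ))) := by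
  have hn0 : n ≠ 0 := Nat.one_le_iff_ne_zero.mp hn
  have hD : 0 ≤ √(2 * n) * (n / exp 1) ^ n := by positivity
  have hs : exp (log (stirlingSeq n)) = stirlingSeq n :=
    exp_log ((sqrt_pos.mpr pi_pos).trans_le (sqrt_pi_le_stirlingSeq hn0))
  rw [sqrt_two_pi_mul_rpow_mul_exp, sqrt_two_pi_mul_rpow_mul_exp,
    factorial_eq_stirlingSeq_mul hn0, ← hs]
  exact ⟨mul_le_mul_of_nonneg_right (exp_le_exp.mpr (le_log_stirlingSeq hn0)) hD,
    mul_le_mul_of_nonneg_right (exp_le_exp.mpr (log_stirlingSeq_le hn0)) hD⟩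
end
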